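/- Let g be an orientation-preserving C² diffeomorphism of [0,1) with no fixed point in (0,1). Then the centralizer of g in the group of orientation-preserving C² diffeomorphisms of [0,1) is abelian. -/

import Mathlib

/-!
Kopell: let `f` commute with a `C²` map `g` with `g x < x` on `(0,1)`, and fix some `a ∈ (0,1)`.
Then `f` fixes `g a`, and if `f b < b` for some `b ∈ [g a, a]`, the increments
`fⁿ b - fⁿ⁺¹ b` would be bounded below, which is absurd. Indeed, conjugating by `gᵐ` and letting
`m → ∞` shows that `(fⁿ)'` on `[g a, a]` is comparable to `(fⁿ)'(0)` up to a factor independent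
of `n`, namely the distortion of the `gᵐ` on `[g a, a]`, which is bounded because the intervals
`gᵏ [g a, a]` are disjoint and `log g'` is Lipschitz. As `fⁿ` fixes both ends of `[g a, a]`,
`(fⁿ)' = 1` somewhere there, so `(fⁿ)'` is bounded below on `[g a, a]`. Hence the centralizer
of `g` acts freely on `(0,1)`.

Hölder: ordering a group acting freely on `(0,1)` by the image of `1/2` gives a bi-invariant
archimedean order. Such a group is cyclic if it has a least positive element; otherwise every
`c > 1` dominates some `δ²` with `δ > 1`, and bracketing `a` and `b` between consecutive powers
of `δ` gives `a b (b a)⁻¹ < δ²`, so `a b (b a)⁻¹ ≤ 1` for all `a`, `b`.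
-/

/-- A model for an orientation-preserving C^r diffeomorphism of the half-open
interval [0,1): a permutation of ℝ that is the identity outside [0,1), restricts to a
C^r monotone bijection of [0,1) with C^r inverse. -/
def IsIcoDiff (r : ℕ∞) (g : Equiv.Perm ℝ) : Prop :=
  ContDiffOn ℝ r ⇑g (Set.Ico 0 1) ∧ ContDiffOn ℝ r ⇑g.symm (Set.Ico 0 1) ∧
  Set.BijOn ⇑g (Set.Ico 0 1) (Set.Ico 0 1) ∧ StrictMonoOn ⇑g (Set.Ico 0 1) ∧
  ∀ x : ℝ, x ∉ Set.Ico (0:ℝ) 1 → g x = x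

open Set Filter Topology

section Holder

theorem Monotone.exists_le_and_lt_add_one {α : Type*} [LinearOrder α] {u : ℤ → α}
    (hu : Monotone u) {y : α} (hlo : ∃ m, u m ≤ y) (hhi : ∃ n, y < u n) :
    ∃ p, u p ≤ y ∧ y < u (p + 1) := by
  obtain ⟨n, hn⟩ := hhi
  have hbdd : ∃ b : ℤ, ∀ p, u p ≤ y → p ≤ b :=
    ⟨n, fun p hp => not_lt.1 fun h => (hn.trans_le (hu h.le)).not_ge hp⟩
  obtain ⟨p, hp, hmax⟩ := Int.exists_greatest_of_bdd hbdd hlo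
  exact ⟨p, hp, not_le.1 fun h => (hmax _ h).not_gt (lt_add_one p)⟩

variable {G : Type*} [Group G] [LinearOrder G] [MulLeftMono G] [MulRightMono G]

theorem exists_zpow_le_and_lt_zpow_add_one (harch : ∀ a b : G, 1 < a → ∃ n : ℕ, b < a ^ n)
    {δ : G} (hδ : 1 < δ) (b : G) : ∃ p : ℤ, δ ^ p ≤ b ∧ b < δ ^ (p + 1) := by
  refine Monotone.exists_le_and_lt_add_one (u := (δ ^ ·))
    (monotone_int_of_le_succ fun p => ?_) ?_ ?_
  · rw [zpow_add_one]
    exact le_mul_of_one_le_right' hδ.le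
  · obtain ⟨n, hn⟩ := harch δ b⁻¹ hδ
    exact ⟨-n, by simpa using inv_le_of_inv_le' hn.le⟩
  · obtain ⟨n, hn⟩ := harch δ b hδ
    exact ⟨n, by simpa using hn⟩

theorem commute_of_archimedean (harch : ∀ a b : G, 1 < a → ∃ n : ℕ, b < a ^ n) (a b : G) :
    Commute a b := by
  by_cases hmin : ∃ s : G, 1 < s ∧ ∀ e : G, 1 < e → s ≤ e
  · obtain ⟨s, hs, hsmin⟩ := hmin
    have hzpow : ∀ a : G, ∃ p : ℤ, s ^ p = a := by
      intro a
      obtain ⟨p, hle, hlt⟩ := exists_zpow_le_and_lt_zpow_add_one harch hs a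
      have h1 : 1 ≤ (s ^ p)⁻¹ * a := le_inv_mul_iff_mul_le.2 (by rwa [mul_one])
      have h2 : (s ^ p)⁻¹ * a < s := inv_mul_lt_iff_lt_mul.2 (by rwa [← zpow_add_one])
      rcases h1.eq_or_lt with h | h
      · exact ⟨p, inv_mul_eq_one.1 h.symm⟩
      · exact absurd (hsmin _ h) (not_le.2 h2)
    obtain ⟨p, rfl⟩ := hzpow a
    obtain ⟨q, rfl⟩ := hzpow b
    exact Commute.zpow_zpow_self s p q
  · push Not at hmin
    have hhalf : ∀ c : G, 1 < c → ∃ δ : G, 1 < δ ∧ δ * δ ≤ c := by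
      intro c hc
      obtain ⟨e, he, hec⟩ := hmin c hc
      by_cases hee : e * e ≤ c
      · exact ⟨e, he, hee⟩
      refine ⟨e⁻¹ * c, lt_inv_mul_iff_mul_lt.2 (by rwa [mul_one]), ?_⟩
      calc e⁻¹ * c * (e⁻¹ * c) = e⁻¹ * (c * e⁻¹) * c := by group
        _ ≤ e⁻¹ * e * c :=
          mul_le_mul' (mul_le_mul' le_rfl (mul_inv_le_iff_le_mul.2 (not_le.1 hee).le)) le_rfl
        _ = c := by group
    wlog hba : b * a < a * b generalizing a b
    · rcases (not_lt.1 hba).eq_or_lt with h | h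
      · exact h
      · exact (this b a h).symm
    exfalso
    obtain ⟨δ, hδ, hδc⟩ := hhalf (a * b * (b * a)⁻¹) (lt_mul_inv_iff_mul_lt.2 (by rwa [one_mul]))
    obtain ⟨p, hpa, hap⟩ := exists_zpow_le_and_lt_zpow_add_one harch hδ a
    obtain ⟨q, hqb, hbq⟩ := exists_zpow_le_and_lt_zpow_add_one harch hδ b
    have hlow : δ ^ (q + p + 2) ≤ a * b :=
      calc δ ^ (q + p + 2) = δ * δ * (δ ^ q * δ ^ p) := by group
        _ ≤ a * b * (b * a)⁻¹ * (b * a) := mul_le_mul' hδc (mul_le_mul' hqb hpa)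
        _ = a * b := by group
    have hhigh : a * b < δ ^ (q + p + 2) :=
      calc a * b < δ ^ (p + 1) * δ ^ (q + 1) := mul_lt_mul_of_lt_of_le hap hbq.le
        _ = δ ^ (q + p + 2) := by group
    exact hlow.not_gt hhigh

end Holder

namespace IsIcoDiff

variable {r : ℕ∞} {e e' : Equiv.Perm ℝ}

theorem mapsTo (he : IsIcoDiff r e) : MapsTo e (Ico 0 1) (Ico 0 1) := he.2.2.1.mapsTo

theorem strictMono (he : IsIcoDiff r e) : StrictMono e := by
  obtain ⟨-, -, hbij, hmono, hout⟩ := he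
  intro x y hxy
  by_cases hx : x ∈ Ico (0:ℝ) 1 <;> by_cases hy : y ∈ Ico (0:ℝ) 1
  · exact hmono hx hy hxy
  · have hy1 : 1 ≤ y := by by_contra h; exact hy ⟨hx.1.trans hxy.le, not_le.1 h⟩
    rw [hout y hy]
    exact (hbij.mapsTo hx).2.trans_le hy1
  · have hx0 : x < 0 := by by_contra h; exact hx ⟨not_lt.1 h, hxy.trans hy.2⟩
    rw [hout x hx]
    exact hx0.trans_le (hbij.mapsTo hy).1
  · rwa [hout x hx, hout y hy]

theorem map_zero (he : IsIcoDiff r e) : e 0 = 0 := by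
  obtain ⟨y, hy, hy0⟩ := he.2.2.1.surjOn (show (0:ℝ) ∈ Ico 0 1 by simp)
  exact le_antisymm ((he.strictMono.monotone hy.1).trans_eq hy0) (he.mapsTo (by simp)).1

theorem mapsTo_Ioo (he : IsIcoDiff r e) : MapsTo e (Ioo 0 1) (Ioo 0 1) := fun _ hx =>
  ⟨he.map_zero ▸ he.strictMono hx.1, (he.mapsTo (Ioo_subset_Ico_self hx)).2⟩

theorem continuous (he : IsIcoDiff r e) : Continuous e :=
  he.strictMono.monotone.continuous_of_surjective e.surjective

theorem eq_one_of_forall_apply_eq (he : IsIcoDiff r e) (h : ∀ x ∈ Ioo (0:ℝ) 1, e x = x) :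
    e = 1 := by
  ext x
  by_cases hx : x ∈ Ico (0:ℝ) 1
  · rcases hx.1.eq_or_lt with rfl | hx0
    · exact he.map_zero
    · exact h x ⟨hx0, hx.2⟩
  · exact he.2.2.2.2 x hx

theorem inv (he : IsIcoDiff r e) : IsIcoDiff r e⁻¹ :=
  ⟨he.2.1, he.1, he.2.2.1.equiv_symm,
    fun _ _ _ _ hxy => he.strictMono.lt_iff_lt.1 (by simpa using hxy),
    fun x hx => e.symm_apply_eq.2 (he.2.2.2.2 x hx).symm⟩

theorem mul (he : IsIcoDiff r e) (he' : IsIcoDiff r e') : IsIcoDiff r (e * e') :=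
  ⟨he.1.comp he'.1 he'.mapsTo, he'.2.1.comp he.2.1 he.inv.mapsTo, he.2.2.1.comp he'.2.2.1,
    fun _ _ _ _ hxy => he.strictMono (he'.strictMono hxy),
    fun x hx => by simp [he'.2.2.2.2 x hx, he.2.2.2.2 x hx]⟩

theorem one : IsIcoDiff r 1 :=
  ⟨contDiffOn_id, contDiffOn_id, bijOn_id _, strictMono_id.strictMonoOn _, fun _ _ => rfl⟩

end IsIcoDiff

def icoDiffGroup (r : ℕ∞) : Subgroup (Equiv.Perm ℝ) where
  carrier := {e | IsIcoDiff r e}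
  mul_mem' := IsIcoDiff.mul
  one_mem' := IsIcoDiff.one
  inv_mem' := IsIcoDiff.inv

namespace IsIcoDiff

variable {r : ℕ∞} {e : Equiv.Perm ℝ}

theorem pow (he : IsIcoDiff r e) (n : ℕ) : IsIcoDiff r (e ^ n) := (icoDiffGroup r).pow_mem he n

theorem zpow (he : IsIcoDiff r e) (n : ℤ) : IsIcoDiff r (e ^ n) :=
  (icoDiffGroup r).zpow_mem he n

theorem antitone_pow_apply (he : IsIcoDiff r e) (hcontr : ∀ x ∈ Ioo (0:ℝ) 1, e x < x)
    {x : ℝ} (hx : x ∈ Ico (0:ℝ) 1) : Antitone fun n : ℕ => (e ^ n) x := by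
  refine antitone_nat_of_succ_le fun n => ?_
  have hmem := (he.pow n).mapsTo hx
  rw [pow_succ', Equiv.Perm.mul_apply]
  rcases hmem.1.eq_or_lt with h | h
  · rw [← h, he.map_zero]
  · exact (hcontr _ ⟨h, hmem.2⟩).le

theorem tendsto_pow_apply_zero (he : IsIcoDiff r e) (hcontr : ∀ x ∈ Ioo (0:ℝ) 1, e x < x)
    {x : ℝ} (hx : x ∈ Ico (0:ℝ) 1) : Tendsto (fun n : ℕ => (e ^ n) x) atTop (𝓝 0) := by
  have hnonneg : ∀ n : ℕ, 0 ≤ (e ^ n) x := fun n => ((he.pow n).mapsTo hx).1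
  have hbdd : BddBelow (range fun n : ℕ => (e ^ n) x) := ⟨0, by rintro _ ⟨n, rfl⟩; exact hnonneg n⟩
  have hlim := tendsto_atTop_ciInf (he.antitone_pow_apply hcontr hx) hbdd
  rcases (le_ciInf hnonneg).eq_or_lt with h | h
  · rwa [← h] at hlim
  · have hlt1 : ⨅ n : ℕ, (e ^ n) x < 1 := (ciInf_le hbdd 0).trans_lt (by simpa using hx.2)
    have hfix := isFixedPt_of_tendsto_iterate (by simpa only [Equiv.Perm.coe_pow] using hlim)
      he.continuous.continuousAt
    exact absurd hfix (hcontr _ ⟨h, hlt1⟩).ne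

end IsIcoDiff

theorem IsPreconnected.forall_lt_self {α : Type*} [LinearOrder α] [TopologicalSpace α]
    [OrderClosedTopology α] {s : Set α} (hs : IsPreconnected s) {φ : α → α}
    (hφ : ContinuousOn φ s) (hfix : ∀ y ∈ s, φ y ≠ y) {x : α} (hx : x ∈ s) (hlt : φ x < x) :
    ∀ y ∈ s, φ y < y := by
  intro y hy
  by_contra! hle
  obtain ⟨z, hz, hφz⟩ := hs.intermediate_value₂ hx hy hφ continuousOn_id hlt.le hle
  exact hfix z hz hφz

def IsFreeOnIoo (H : Subgroup (Equiv.Perm ℝ)) : Prop :=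
  ∀ h ∈ H, ∀ x ∈ Ioo (0:ℝ) 1, h x = x → h = 1

namespace IsFreeOnIoo

variable {r : ℕ∞} {H : Subgroup (Equiv.Perm ℝ)}

theorem forall_lt_self (hH : ∀ h ∈ H, IsIcoDiff r h) (hfree : IsFreeOnIoo H)
    {h : Equiv.Perm ℝ} (hh : h ∈ H) {x : ℝ} (hx : x ∈ Ioo (0:ℝ) 1) (hlt : h x < x) :
    ∀ y ∈ Ioo (0:ℝ) 1, h y < y :=
  isPreconnected_Ioo.forall_lt_self (hH h hh).continuous.continuousOn
    (fun y hy hfix => hlt.ne (by rw [hfree h hh y hy hfix]; rfl)) hx hlt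

theorem apply_le_apply (hH : ∀ h ∈ H, IsIcoDiff r h) (hfree : IsFreeOnIoo H)
    {h h' : Equiv.Perm ℝ} (hh : h ∈ H) (hh' : h' ∈ H) {x : ℝ} (hx : x ∈ Ioo (0:ℝ) 1)
    (hle : h x ≤ h' x) : ∀ y ∈ Ioo (0:ℝ) 1, h y ≤ h' y := by
  intro y hy
  have hk : h'⁻¹ * h ∈ H := H.mul_mem (H.inv_mem hh') hh
  have hkx : (h'⁻¹ * h) x ≤ x := by
    simpa using (hH _ (H.inv_mem hh')).strictMono.monotone hle
  rcases hkx.eq_or_lt with heq | hlt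
  · rw [inv_mul_eq_one.1 (hfree _ hk x hx heq)]
  · simpa using ((hH h' hh').strictMono (forall_lt_self hH hfree hk hx hlt y hy)).le

theorem commute (hH : ∀ h ∈ H, IsIcoDiff r h) (hfree : IsFreeOnIoo H)
    {a b : Equiv.Perm ℝ} (ha : a ∈ H) (hb : b ∈ H) : Commute a b := by
  have hx₀ : (1 / 2 : ℝ) ∈ Ioo (0:ℝ) 1 := by norm_num
  let _ : LinearOrder H := LinearOrder.lift' (fun h : H => (h : Equiv.Perm ℝ) (1 / 2))
    fun h h' hhh' => Subtype.ext (inv_mul_eq_one.1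
      (hfree _ (H.mul_mem (H.inv_mem h'.2) h.2) _ hx₀ (Equiv.Perm.inv_eq_iff_eq.2 hhh'))).symm
  have : MulLeftMono H := ⟨fun k _ _ hle => (hH k k.2).strictMono.monotone hle⟩
  have : MulRightMono H := ⟨fun k h h' hle =>
    apply_le_apply hH hfree h.2 h'.2 hx₀ hle _ ((hH k k.2).mapsTo_Ioo hx₀)⟩
  have harch : ∀ a b : H, 1 < a → ∃ n : ℕ, b < a ^ n := by
    intro a b hab
    have ha' := hH _ (H.inv_mem a.2)
    have hcontr : ∀ y ∈ Ioo (0:ℝ) 1, (a : Equiv.Perm ℝ)⁻¹ y < y :=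
      forall_lt_self hH hfree (H.inv_mem a.2) hx₀ (by simpa using ha'.strictMono hab)
    have hbx₀ := Ioo_subset_Ico_self ((hH b b.2).mapsTo_Ioo hx₀)
    obtain ⟨n, hn⟩ :=
      ((ha'.tendsto_pow_apply_zero hcontr hbx₀).eventually (gt_mem_nhds hx₀.1)).exists
    refine ⟨n, show (b : Equiv.Perm ℝ) (1 / 2) < ((a ^ n : H) : Equiv.Perm ℝ) (1 / 2) from ?_⟩
    simpa [inv_pow] using (hH _ (H.pow_mem a.2 n)).strictMono hn
  exact congrArg Subtype.val (commute_of_archimedean harch ⟨a, ha⟩ ⟨b, hb⟩)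

end IsFreeOnIoo

noncomputable def icoDeriv (e : Equiv.Perm ℝ) (x : ℝ) : ℝ := derivWithin e (Ico 0 1) x

theorem icoDeriv_eq_deriv (e : Equiv.Perm ℝ) {x : ℝ} (hx : x ∈ Ioo (0:ℝ) 1) :
    icoDeriv e x = deriv e x :=
  derivWithin_of_mem_nhds (Ico_mem_nhds hx.1 hx.2)

namespace IsIcoDiff

open Real

variable {r : ℕ∞} {e e' g k : Equiv.Perm ℝ} {x : ℝ}

theorem differentiableOn (he : IsIcoDiff r e) (hr : 1 ≤ r) : DifferentiableOn ℝ e (Ico 0 1) :=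
  he.1.differentiableOn (by exact_mod_cast (zero_lt_one.trans_le hr).ne')

theorem hasDerivWithinAt (he : IsIcoDiff r e) (hr : 1 ≤ r) (hx : x ∈ Ico (0:ℝ) 1) :
    HasDerivWithinAt e (icoDeriv e x) (Ico 0 1) x :=
  (he.differentiableOn hr x hx).hasDerivWithinAt

theorem icoDeriv_mul (he : IsIcoDiff r e) (he' : IsIcoDiff r e') (hr : 1 ≤ r)
    (hx : x ∈ Ico (0:ℝ) 1) : icoDeriv (e * e') x = icoDeriv e (e' x) * icoDeriv e' x :=
  ((he.hasDerivWithinAt hr (he'.mapsTo hx)).comp x (he'.hasDerivWithinAt hr hx)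
    he'.mapsTo).derivWithin (uniqueDiffOn_Ico 0 1 x hx)

theorem icoDeriv_pos (he : IsIcoDiff r e) (hr : 1 ≤ r) (hx : x ∈ Ico (0:ℝ) 1) :
    0 < icoDeriv e x := by
  have hinv : icoDeriv e⁻¹ (e x) * icoDeriv e x = 1 := by
    rw [← he.inv.icoDeriv_mul he hr hx, inv_mul_cancel]
    exact derivWithin_id x _ (uniqueDiffOn_Ico 0 1 x hx)
  refine (he.strictMono.monotone.monotoneOn _).derivWithin_nonneg.lt_of_ne fun h => ?_
  rw [show icoDeriv e x = 0 from h.symm, mul_zero] at hinv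
  exact zero_ne_one hinv

theorem continuousOn_icoDeriv (he : IsIcoDiff r e) (hr : 1 ≤ r) :
    ContinuousOn (icoDeriv e) (Ico 0 1) :=
  he.1.continuousOn_derivWithin (uniqueDiffOn_Ico 0 1) (by exact_mod_cast hr)

theorem log_icoDeriv_pow (he : IsIcoDiff r e) (hr : 1 ≤ r) (n : ℕ) (hx : x ∈ Ico (0:ℝ) 1) :
    log (icoDeriv (e ^ n) x) = ∑ k ∈ Finset.range n, log (icoDeriv e ((e ^ k) x)) := by
  induction n with
  | zero =>
    rw [pow_zero, Finset.sum_range_zero, icoDeriv, Equiv.Perm.coe_one,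
      derivWithin_id x _ (uniqueDiffOn_Ico 0 1 x hx), log_one]
  | succ n ih =>
    rw [pow_succ', he.icoDeriv_mul (he.pow n) hr hx,
      log_mul (he.icoDeriv_pos hr ((he.pow n).mapsTo hx)).ne' ((he.pow n).icoDeriv_pos hr hx).ne',
      ih, Finset.sum_range_succ, add_comm]

theorem exists_lipschitzOnWith_log_icoDeriv (he : IsIcoDiff r e) (hr : 2 ≤ r) {a : ℝ}
    (ha : a < 1) : ∃ K, LipschitzOnWith K (fun x => log (icoDeriv e x)) (Icc 0 a) := by
  have hsub : Icc 0 a ⊆ Ico (0:ℝ) 1 := Icc_subset_Ico_right ha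
  have hC1 : ContDiffOn ℝ 1 (icoDeriv e) (Ico 0 1) :=
    he.1.derivWithin (uniqueDiffOn_Ico 0 1) (WithTop.coe_le_coe.2 hr)
  exact ((hC1.mono hsub).log fun x hx => (he.icoDeriv_pos (one_le_two.trans hr) (hsub hx)).ne')
    |>.exists_lipschitzOnWith one_ne_zero (convex_Icc 0 a) isCompact_Icc

theorem Icc_subset_Ico (hg : IsIcoDiff r g) {a : ℝ} (ha : a ∈ Ioo (0:ℝ) 1) :
    Icc (g a) a ⊆ Ico 0 1 :=
  fun _ hz => ⟨(hg.mapsTo_Ioo ha).1.le.trans hz.1, hz.2.trans_lt ha.2⟩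

theorem Ioo_subset_Ioo (hg : IsIcoDiff r g) {a : ℝ} (ha : a ∈ Ioo (0:ℝ) 1) :
    Ioo (g a) a ⊆ Ioo 0 1 :=
  fun _ hz => ⟨(hg.mapsTo_Ioo ha).1.trans hz.1, hz.2.trans ha.2⟩

/-- Bounded distortion: the orbit of `[g a, a]` under `g` consists of disjoint intervals of
total length at most `a`, on which `log (icoDeriv g)` is Lipschitz. -/
theorem exists_icoDeriv_pow_le (hg : IsIcoDiff r g) (hr : 2 ≤ r)
    (hcontr : ∀ x ∈ Ioo (0:ℝ) 1, g x < x) {a : ℝ} (ha : a ∈ Ioo (0:ℝ) 1) :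
    ∃ V, ∀ m : ℕ, ∀ x ∈ Icc (g a) a, ∀ y ∈ Icc (g a) a,
      icoDeriv (g ^ m) x ≤ exp V * icoDeriv (g ^ m) y := by
  obtain ⟨K, hK⟩ := hg.exists_lipschitzOnWith_log_icoDeriv hr ha.2
  have hr1 : 1 ≤ r := one_le_two.trans hr
  have ha' := Ioo_subset_Ico_self ha
  have hiter : ∀ z ∈ Icc (g a) a, ∀ k : ℕ, (g ^ k) z ∈ Icc ((g ^ (k + 1)) a) ((g ^ k) a) := by
    intro z hz k
    rw [pow_succ, Equiv.Perm.mul_apply]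
    exact ⟨(hg.pow k).strictMono.monotone hz.1, (hg.pow k).strictMono.monotone hz.2⟩
  have hsub : ∀ k : ℕ, Icc ((g ^ (k + 1)) a) ((g ^ k) a) ⊆ Icc 0 a := fun k _ hz =>
    ⟨((hg.pow (k + 1)).mapsTo ha').1.trans hz.1,
      hz.2.trans (by simpa using hg.antitone_pow_apply hcontr ha' (Nat.zero_le k))⟩
  refine ⟨K * a, fun m x hx y hy => ?_⟩
  have hlog : log (icoDeriv (g ^ m) x) - log (icoDeriv (g ^ m) y) ≤ K * a := by
    rw [hg.log_icoDeriv_pow hr1 m (hg.Icc_subset_Ico ha hx),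
      hg.log_icoDeriv_pow hr1 m (hg.Icc_subset_Ico ha hy), ← Finset.sum_sub_distrib]
    calc ∑ k ∈ Finset.range m, (log (icoDeriv g ((g ^ k) x)) - log (icoDeriv g ((g ^ k) y)))
        ≤ ∑ k ∈ Finset.range m, K * ((g ^ k) a - (g ^ (k + 1)) a) := by
          refine Finset.sum_le_sum fun k _ => ?_
          refine (le_abs_self _).trans ?_
          rw [← Real.dist_eq]
          exact (hK.dist_le_mul _ (hsub k (hiter x hx k)) _
            (hsub k (hiter y hy k))).trans <| mul_le_mul_of_nonneg_left
              (Real.dist_le_of_mem_Icc (hiter x hx k) (hiter y hy k)) K.2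
      _ = K * (a - (g ^ m) a) := by
          rw [← Finset.mul_sum, Finset.sum_range_sub' (fun k => (g ^ k) a), pow_zero,
            Equiv.Perm.coe_one, id]
      _ ≤ K * a := mul_le_mul_of_nonneg_left (by linarith [((hg.pow m).mapsTo ha').1]) K.2
  have hxpos := (hg.pow m).icoDeriv_pos hr1 (hg.Icc_subset_Ico ha hx)
  have hypos := (hg.pow m).icoDeriv_pos hr1 (hg.Icc_subset_Ico ha hy)
  rw [← log_le_log_iff hxpos (by positivity), log_mul (exp_pos _).ne' hypos.ne', log_exp]
  linarith

end IsIcoDiff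

theorem Equiv.Perm.apply_apply_eq_of_commute {α : Type*} {g k : Equiv.Perm α}
    (hcomm : Commute g k) {a : α} (hka : k a = a) : k (g a) = g a := by
  rw [← Equiv.Perm.mul_apply, ← hcomm.eq, Equiv.Perm.mul_apply, hka]

section Kopell

open Real

variable {r : ℕ∞} {g f k : Equiv.Perm ℝ}

/-- Differentiating `g ^ m * k = k * g ^ m` and letting `m → ∞` compares `icoDeriv k` on
`[g a, a]` with `icoDeriv k 0`, up to the distortion of the powers of `g`. -/
theorem icoDeriv_le_of_commute (hg : IsIcoDiff r g) (hr : 1 ≤ r)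
    (hcontr : ∀ x ∈ Ioo (0:ℝ) 1, g x < x) (hk : IsIcoDiff r k) (hcomm : Commute g k)
    {a : ℝ} (ha : a ∈ Ioo (0:ℝ) 1) (hka : k a = a) {V : ℝ}
    (hV : ∀ m : ℕ, ∀ x ∈ Icc (g a) a, ∀ y ∈ Icc (g a) a,
      icoDeriv (g ^ m) x ≤ exp V * icoDeriv (g ^ m) y)
    {x : ℝ} (hx : x ∈ Icc (g a) a) :
    icoDeriv k x ≤ exp V * icoDeriv k 0 ∧ icoDeriv k 0 ≤ exp V * icoDeriv k x := by
  have hxI := hg.Icc_subset_Ico ha hx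
  have hkx : k x ∈ Icc (g a) a :=
    ⟨(Equiv.Perm.apply_apply_eq_of_commute hcomm hka).symm.le.trans
      (hk.strictMono.monotone hx.1), (hk.strictMono.monotone hx.2).trans hka.le⟩
  have hbounds : ∀ m : ℕ, icoDeriv k ((g ^ m) x) ≤ exp V * icoDeriv k x ∧
      icoDeriv k x ≤ exp V * icoDeriv k ((g ^ m) x) := by
    intro m
    have hchain : icoDeriv k ((g ^ m) x) * icoDeriv (g ^ m) x =
        icoDeriv (g ^ m) (k x) * icoDeriv k x := by
      rw [← hk.icoDeriv_mul (hg.pow m) hr hxI, ← (hg.pow m).icoDeriv_mul hk hr hxI,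
        (hcomm.pow_left m).eq]
    have hB := (hg.pow m).icoDeriv_pos hr hxI
    have hC := (hg.pow m).icoDeriv_pos hr (hg.Icc_subset_Ico ha hkx)
    constructor
    · refine le_of_mul_le_mul_right ?_ hB
      calc icoDeriv k ((g ^ m) x) * icoDeriv (g ^ m) x
          = icoDeriv (g ^ m) (k x) * icoDeriv k x := hchain
        _ ≤ exp V * icoDeriv (g ^ m) x * icoDeriv k x :=
          mul_le_mul_of_nonneg_right (hV m _ hkx _ hx) (hk.icoDeriv_pos hr hxI).le
        _ = exp V * icoDeriv k x * icoDeriv (g ^ m) x := by ring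
    · refine le_of_mul_le_mul_right ?_ hC
      calc icoDeriv k x * icoDeriv (g ^ m) (k x)
          = icoDeriv k ((g ^ m) x) * icoDeriv (g ^ m) x := by rw [hchain, mul_comm]
        _ ≤ icoDeriv k ((g ^ m) x) * (exp V * icoDeriv (g ^ m) (k x)) :=
          mul_le_mul_of_nonneg_left (hV m _ hx _ hkx)
            (hk.icoDeriv_pos hr ((hg.pow m).mapsTo hxI)).le
        _ = exp V * icoDeriv k ((g ^ m) x) * icoDeriv (g ^ m) (k x) := by ring
  have hlim : Tendsto (fun m : ℕ => icoDeriv k ((g ^ m) x)) atTop (𝓝 (icoDeriv k 0)) :=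
    (hk.continuousOn_icoDeriv hr 0 (by simp)).tendsto.comp <| tendsto_nhdsWithin_iff.2
      ⟨hg.tendsto_pow_apply_zero hcontr hxI, Eventually.of_forall fun m => (hg.pow m).mapsTo hxI⟩
  exact ⟨ge_of_tendsto (hlim.const_mul _) (Eventually.of_forall fun m => (hbounds m).2),
    le_of_tendsto hlim (Eventually.of_forall fun m => (hbounds m).1)⟩

/-- Since `k` fixes both ends of `[g a, a]`, its derivative equals `1` somewhere in between. -/
theorem exp_neg_le_icoDeriv_of_commute (hg : IsIcoDiff r g) (hr : 1 ≤ r)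
    (hcontr : ∀ x ∈ Ioo (0:ℝ) 1, g x < x) (hk : IsIcoDiff r k) (hcomm : Commute g k)
    {a : ℝ} (ha : a ∈ Ioo (0:ℝ) 1) (hka : k a = a) {V : ℝ}
    (hV : ∀ m : ℕ, ∀ x ∈ Icc (g a) a, ∀ y ∈ Icc (g a) a,
      icoDeriv (g ^ m) x ≤ exp V * icoDeriv (g ^ m) y)
    {x : ℝ} (hx : x ∈ Icc (g a) a) : exp (-(2 * V)) ≤ icoDeriv k x := by
  have hga : g a < a := hcontr a ha
  have hIoo := hg.Ioo_subset_Ioo ha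
  obtain ⟨η, hη, hslope⟩ := exists_deriv_eq_slope k hga hk.continuous.continuousOn
    ((hk.differentiableOn hr).mono (hIoo.trans Ioo_subset_Ico_self))
  rw [hka, Equiv.Perm.apply_apply_eq_of_commute hcomm hka, div_self (sub_ne_zero.2 hga.ne'),
    ← icoDeriv_eq_deriv k (hIoo hη)] at hslope
  have h1 := (icoDeriv_le_of_commute hg hr hcontr hk hcomm ha hka hV (Ioo_subset_Icc_self hη)).1
  have h2 := (icoDeriv_le_of_commute hg hr hcontr hk hcomm ha hka hV hx).2
  rw [hslope] at h1
  calc exp (-(2 * V)) = exp (-(2 * V)) * 1 := (mul_one _).symm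
    _ ≤ exp (-(2 * V)) * (exp V * (exp V * icoDeriv k x)) := by gcongr; nlinarith [exp_pos V]
    _ = icoDeriv k x := by rw [← mul_assoc, ← mul_assoc, ← exp_add, ← exp_add]; ring_nf; simp

/-- If `f b < b`, the increments `(f ^ n) b - (f ^ (n + 1)) b` are bounded below, since the
derivatives of the powers of `f` are; but they add up to at most `1`. -/
theorem apply_eq_self_of_commute (hg : IsIcoDiff r g) (hr : 2 ≤ r)
    (hcontr : ∀ x ∈ Ioo (0:ℝ) 1, g x < x) (hf : IsIcoDiff r f) (hcomm : Commute g f)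
    {a : ℝ} (ha : a ∈ Ioo (0:ℝ) 1) (hfa : f a = a) {b : ℝ} (hb : b ∈ Icc (g a) a) :
    f b = b := by
  wlog hlt : f b < b generalizing f
  · rcases (not_lt.1 hlt).eq_or_lt with h | h
    · exact h.symm
    · have hinv := this hf.inv hcomm.inv_right (Equiv.Perm.inv_eq_iff_eq.2 hfa.symm)
        (by simpa using hf.inv.strictMono h)
      exact (Equiv.Perm.inv_eq_iff_eq.1 hinv).symm
  exfalso
  have hr1 : 1 ≤ r := one_le_two.trans hr
  obtain ⟨V, hV⟩ := hg.exists_icoDeriv_pow_le hr hcontr ha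
  have hfb : f b ∈ Icc (g a) a := ⟨(Equiv.Perm.apply_apply_eq_of_commute hcomm hfa).symm.le.trans
    (hf.strictMono.monotone hb.1), hlt.le.trans hb.2⟩
  have hstep : ∀ n : ℕ, exp (-(2 * V)) * (b - f b) ≤ (f ^ n) b - (f ^ (n + 1)) b := by
    intro n
    have hfn := hf.pow n
    have hIoo := hg.Ioo_subset_Ioo ha
    rw [pow_succ, Equiv.Perm.mul_apply]
    refine (convex_Icc (g a) a).mul_sub_le_image_sub_of_le_deriv hfn.continuous.continuousOn
      ((hfn.differentiableOn hr1).mono ?_) (fun y hy => ?_) _ hfb _ hb hlt.le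
    · rw [interior_Icc]
      exact hIoo.trans Ioo_subset_Ico_self
    · rw [interior_Icc] at hy
      rw [← icoDeriv_eq_deriv _ (hIoo hy)]
      exact exp_neg_le_icoDeriv_of_commute hg hr1 hcontr hfn (hcomm.pow_right n) ha
        (Equiv.Perm.pow_apply_eq_self_of_apply_eq_self hfa n) hV (Ioo_subset_Icc_self hy)
  have hpos : 0 < exp (-(2 * V)) * (b - f b) := mul_pos (exp_pos _) (sub_pos.2 hlt)
  obtain ⟨N, hN⟩ := exists_nat_gt (1 / (exp (-(2 * V)) * (b - f b)))
  have hsum : N * (exp (-(2 * V)) * (b - f b)) ≤ 1 :=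
    calc N * (exp (-(2 * V)) * (b - f b))
        = ∑ n ∈ Finset.range N, exp (-(2 * V)) * (b - f b) := by simp
      _ ≤ ∑ n ∈ Finset.range N, ((f ^ n) b - (f ^ (n + 1)) b) :=
          Finset.sum_le_sum fun n _ => hstep n
      _ = b - (f ^ N) b := by rw [Finset.sum_range_sub' (fun n => (f ^ n) b)]; simp
      _ ≤ 1 := by linarith [((hf.pow N).mapsTo (hg.Icc_subset_Ico ha hb)).1, hb.2, ha.2]
  rw [div_lt_iff₀ hpos] at hN
  linarith

theorem IsIcoDiff.exists_zpow_mem_Icc (hg : IsIcoDiff r g) (hcontr : ∀ x ∈ Ioo (0:ℝ) 1, g x < x)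
    {z x : ℝ} (hz : z ∈ Ioo (0:ℝ) 1) (hx : x ∈ Ioo (0:ℝ) 1) :
    ∃ n : ℤ, x ∈ Icc (g ((g ^ n) z)) ((g ^ n) z) := by
  have hmono : Monotone fun p : ℤ => (g ^ (-p)) z := by
    refine monotone_int_of_le_succ fun p => ?_
    have hmem := (hg.zpow (-p)).mapsTo_Ioo hz
    rw [show -(p + 1) = -1 + -p by ring, zpow_add, zpow_neg_one, Equiv.Perm.mul_apply]
    simpa using (hcontr _ (hg.inv.mapsTo_Ioo hmem)).le
  obtain ⟨p, hp, hp'⟩ := hmono.exists_le_and_lt_add_one (y := x)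
    (by
      obtain ⟨n, hn⟩ := ((hg.tendsto_pow_apply_zero hcontr (Ioo_subset_Ico_self hz)).eventually
        (gt_mem_nhds hx.1)).exists
      exact ⟨-n, by simpa using hn.le⟩)
    (by
      obtain ⟨n, hn⟩ := ((hg.tendsto_pow_apply_zero hcontr (Ioo_subset_Ico_self hx)).eventually
        (gt_mem_nhds hz.1)).exists
      exact ⟨n, by simpa using (hg.pow n).inv.strictMono hn⟩)
  refine ⟨-(p + 1), ?_, hp'.le⟩
  rwa [← Equiv.Perm.mul_apply, ← zpow_one_add, show 1 + -(p + 1) = -p by ring]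

theorem eq_one_of_commute_of_apply_eq (hg : IsIcoDiff r g) (hr : 2 ≤ r)
    (hgfree : ∀ x ∈ Ioo (0:ℝ) 1, g x ≠ x) (hf : IsIcoDiff r f) (hcomm : Commute g f)
    {z : ℝ} (hz : z ∈ Ioo (0:ℝ) 1) (hfz : f z = z) : f = 1 := by
  wlog hcontr : ∀ x ∈ Ioo (0:ℝ) 1, g x < x generalizing g
  · refine this hg.inv (fun x hx h => hgfree x hx (Equiv.Perm.inv_eq_iff_eq.1 h).symm)
      hcomm.inv_left ?_
    obtain ⟨x, hx, hgx⟩ : ∃ x ∈ Ioo (0:ℝ) 1, x < g x := by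
      push Not at hcontr
      obtain ⟨x, hx, hle⟩ := hcontr
      exact ⟨x, hx, hle.lt_of_ne' (hgfree x hx)⟩
    exact isPreconnected_Ioo.forall_lt_self hg.inv.continuous.continuousOn
      (fun y hy h => hgfree y hy (Equiv.Perm.inv_eq_iff_eq.1 h).symm) hx
      (by simpa using hg.inv.strictMono hgx)
  refine hf.eq_one_of_forall_apply_eq fun x hx => ?_
  obtain ⟨n, hn⟩ := hg.exists_zpow_mem_Icc hcontr hz hx
  exact apply_eq_self_of_commute hg hr hcontr hf hcomm ((hg.zpow n).mapsTo_Ioo hz)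
    (Equiv.Perm.apply_apply_eq_of_commute (hcomm.zpow_left n) hfz) hn

end Kopell

theorem isFreeOnIoo_icoDiffGroup_inf_centralizer {r : ℕ∞} {g : Equiv.Perm ℝ}
    (hg : IsIcoDiff r g) (hr : 2 ≤ r) (hgfree : ∀ x ∈ Ioo (0:ℝ) 1, g x ≠ x) :
    IsFreeOnIoo (icoDiffGroup r ⊓ Subgroup.centralizer {g}) := fun _ hf _ hx hfx =>
  eq_one_of_commute_of_apply_eq hg hr hgfree hf.1
    (Subgroup.mem_centralizer_singleton_iff.1 hf.2).symm hx hfx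

/-- Hölder–Kopell Lemma: if g is an orientation-preserving C² diffeomorphism of [0,1)
with no interior fixed point, then its centralizer in Diff₊²([0,1)) is abelian. -/
theorem holder_kopell_centralizer_abelian (g : Equiv.Perm ℝ) (hg : IsIcoDiff 2 g)
    (hgfree : ∀ x ∈ Set.Ioo (0:ℝ) 1, g x ≠ x) :
    ∀ h₁ h₂ : Equiv.Perm ℝ, IsIcoDiff 2 h₁ → IsIcoDiff 2 h₂ →
      Commute g h₁ → Commute g h₂ → Commute h₁ h₂ := by
  intro h₁ h₂ hI₁ hI₂ hc₁ hc₂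
  exact (isFreeOnIoo_icoDiffGroup_inf_centralizer hg le_rfl hgfree).commute
    (fun _ hh => (Subgroup.mem_inf.1 hh).1)
    (Subgroup.mem_inf.2 ⟨hI₁, Subgroup.mem_centralizer_singleton_iff.2 hc₁.eq.symm⟩)
    (Subgroup.mem_inf.2 ⟨hI₂, Subgroup.mem_centralizer_singleton_iff.2 hc₂.eq.symm⟩)
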